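/- arXiv:2407.16507 — 2 statements merged into one kernel-verified Lean document; each statement's English description precedes it below -/
import Mathlib

section
/- If (u, Ω) with Ω ≠ 0 satisfies Ω² ∂²_τ u = ∂²_x u − u³ (defocusing equation) pointwise on ℝ², then ũ(τ,x) := Ω⁻¹ u(x, τ) together with Ω̃ := Ω⁻¹ satisfies the focusing equation Ω̃² ∂²_τ ũ = ∂²_x ũ + ũ³ pointwise. -/
/-! Under `(τ, x) ↦ (x, τ)` the roles of `Ω² ∂²_τ` and `∂²_x` are exchanged, so multiplying the
defocusing equation by `Ω⁻³` and reading it in the swapped variables gives the focusing one; the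
cubic term changes sign because it moves to the other side. -/

theorem deriv_deriv_const_mul {𝕜 𝕜' : Type*} [NontriviallyNormedField 𝕜] [NormedField 𝕜']
    [NormedAlgebra 𝕜 𝕜'] (c : 𝕜') (f : 𝕜 → 𝕜') (x : 𝕜) :
    deriv (fun s => deriv (fun s' => c * f s') s) x = c * deriv (deriv f) x := by
  simp only [deriv_const_mul_field]

theorem inv_pow_three_mul_sq {G₀ : Type*} [GroupWithZero G₀] (a : G₀) :
    a⁻¹ ^ 3 * a ^ 2 = a⁻¹ := by
  obtain rfl | ha := eq_or_ne a 0
  · simp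
  · simp [pow_succ, mul_assoc, ha]

theorem defocusing_to_focusing_general
    (u : ℝ → ℝ → ℝ) (Ω : ℝ)
    (hpde : ∀ τ x : ℝ,
      Ω ^ 2 * deriv (fun s => deriv (fun s' => u s' x) s) τ =
        deriv (fun y => deriv (fun y' => u τ y') y) x - (u τ x) ^ 3) :
    ∀ τ x : ℝ,
      (Ω⁻¹) ^ 2 * deriv (fun s => deriv (fun s' => Ω⁻¹ * u x s') s) τ =
        deriv (fun y => deriv (fun y' => Ω⁻¹ * u y' τ) y) x + (Ω⁻¹ * u x τ) ^ 3 := by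
  intro τ x
  simp only [deriv_deriv_const_mul]
  linear_combination (-Ω⁻¹ ^ 3) * hpde x τ +
    deriv (deriv fun y => u y τ) x * inv_pow_three_mul_sq Ω

/-- The transformation `ũ(τ,x) = Ω⁻¹ u(x,τ)`, `Ω̃ = Ω⁻¹` maps a solution of the
defocusing rescaled cubic wave equation to a solution of the focusing one. -/
theorem defocusing_to_focusing
    (u : ℝ → ℝ → ℝ) (Ω : ℝ) (hΩ : Ω ≠ 0)
    (hu : ContDiff ℝ 2 (fun p : ℝ × ℝ => u p.1 p.2))
    (hpde : ∀ τ x : ℝ,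
      Ω ^ 2 * deriv (fun s => deriv (fun s' => u s' x) s) τ =
        deriv (fun y => deriv (fun y' => u τ y') y) x - (u τ x) ^ 3) :
    ∀ τ x : ℝ,
      (Ω⁻¹) ^ 2 * deriv (fun s => deriv (fun s' => Ω⁻¹ * u x s') s) τ =
        deriv (fun y => deriv (fun y' => Ω⁻¹ * u y' τ) y) x + (Ω⁻¹ * u x τ) ^ 3 :=
  defocusing_to_focusing_general u Ω hpde
end

section
/- Let 0 < q < 1, α a positive multiple of 4, and f_n = q^{n/2}/(1+q^n) for odd n, 0 for even n. Then ∑_{j=1}^{α/2} ( 1/(1+q^{α−(2j−1)}) + q^{2j−1}/(1+q^{2j−1}) ) = α/2, and consequently ∑_{j=1}^{α−1} f_j f_{α−j} + 2∑_{j=1}^∞ f_{α+j} f_j = (α/2) · q^{α/2}/(1−q^α). -/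
/-- The Fourier coefficients of `cn`: `f n = q^(n/2)/(1+q^n)` for odd `n`, `0` otherwise. -/
noncomputable def cnCoeff (q : ℝ) (n : ℕ) : ℝ :=
  if Odd n then q ^ ((n : ℝ) / 2) / (1 + q ^ n) else 0

/-!
Write `c = q^(α/2)/(1-q^α)` and `w = cnWeight q`, i.e. `w n = q^n/(1+q^n)` for odd `n`, else `0`.
For odd `j` the identity `1/((1+x)(1+y)) = (1/(1+y) - x/(1+x))/(1-xy)` gives
`f j * f (α-j) = c * (1/(1+q^(α-j)) - w j)`, and similarly `f (α+n) * f n = c * (w n - w (n+α))`.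
So the tail telescopes to `c * ∑_{j<α} w j`, and adding twice it to the finite sum leaves `c` times
the pairing sum. That sum is `α/2`: reflecting `j ↦ α-j` among the odd `j < α` turns
`1/(1+q^(α-j))` into `1/(1+q^j)`, which pairs with `w j` to give `1`.
-/

open Finset

lemma sum_range_two_mul_of_even_eq_zero {M : Type*} [AddCommMonoid M] {h : ℕ → M}
    (hh : ∀ j, Even j → h j = 0) (n : ℕ) :
    ∑ j ∈ range (2 * n), h j = ∑ i ∈ range n, h (2 * i + 1) := by
  induction n with
  | zero => simp
  | succ n ih =>
    rw [mul_add, mul_one, sum_range_succ, sum_range_succ, sum_range_succ, ih,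
      hh (2 * n) (even_two_mul n), add_zero]

theorem tsum_sub_nat_add {G : Type*} [AddCommGroup G] [TopologicalSpace G]
    [IsTopologicalAddGroup G] [T2Space G] {f : ℕ → G} (hf : Summable f) (k : ℕ) :
    ∑' n, (f n - f (n + k)) = ∑ i ∈ range k, f i := by
  rw [hf.tsum_sub ((summable_nat_add_iff k).mpr hf), ← hf.sum_add_tsum_nat_add k,
    add_sub_cancel_right]

theorem sum_pairing_eq_half {q : ℝ} (hq : 0 ≤ q) {α : ℕ} (hα : Even α) :
    ∑ j ∈ range (α / 2),
        (1 / (1 + q ^ (α - (2 * j + 1))) + q ^ (2 * j + 1) / (1 + q ^ (2 * j + 1)))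
      = (α : ℝ) / 2 := by
  have hreflect : ∑ j ∈ range (α / 2), 1 / (1 + q ^ (α - (2 * j + 1)))
      = ∑ j ∈ range (α / 2), 1 / (1 + q ^ (2 * j + 1)) := by
    rw [← sum_range_reflect]
    refine sum_congr rfl fun j hj => ?_
    have : α - (2 * (α / 2 - 1 - j) + 1) = 2 * j + 1 := by
      have := mem_range.mp hj
      obtain ⟨k, rfl⟩ := hα
      omega
    rw [this]
  have hpair (m : ℕ) : 1 / (1 + q ^ m) + q ^ m / (1 + q ^ m) = 1 := by
    rw [← add_div, div_self (by positivity)]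
  rw [sum_add_distrib, hreflect, ← sum_add_distrib, sum_congr rfl fun j _ => hpair (2 * j + 1),
    sum_const, card_range, nsmul_one, Nat.cast_div_charZero (even_iff_two_dvd.mp hα),
    Nat.cast_ofNat]

lemma cnCoeff_of_odd {q : ℝ} {n : ℕ} (hn : Odd n) :
    cnCoeff q n = q ^ ((n : ℝ) / 2) / (1 + q ^ n) :=
  if_pos hn

lemma cnCoeff_of_even {q : ℝ} {n : ℕ} (hn : Even n) : cnCoeff q n = 0 :=
  if_neg (Nat.not_odd_iff_even.mpr hn)

theorem cnCoeff_mul_cnCoeff_of_odd {q : ℝ} (hq0 : 0 < q) (hq1 : q < 1) {j m : ℕ}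
    (hj : Odd j) (hm : Odd m) :
    cnCoeff q j * cnCoeff q m
      = q ^ (((j + m : ℕ) : ℝ) / 2) / (1 - q ^ (j + m))
        * (1 / (1 + q ^ m) - q ^ j / (1 + q ^ j)) := by
  have hlt : q ^ (j + m) < 1 := pow_lt_one₀ hq0.le hq1 (by have := hj.pos; omega)
  have hsqrt : q ^ ((j : ℝ) / 2) * q ^ ((m : ℝ) / 2) = q ^ (((j + m : ℕ) : ℝ) / 2) := by
    rw [← Real.rpow_add hq0]
    push_cast
    ring_nf
  rw [cnCoeff_of_odd hj, cnCoeff_of_odd hm, div_mul_div_comm, hsqrt]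
  field_simp [(sub_pos.mpr hlt).ne']
  ring

noncomputable def cnWeight (q : ℝ) (n : ℕ) : ℝ :=
  if Odd n then q ^ n / (1 + q ^ n) else 0

lemma cnWeight_of_odd {q : ℝ} {n : ℕ} (hn : Odd n) : cnWeight q n = q ^ n / (1 + q ^ n) :=
  if_pos hn

lemma cnWeight_of_even {q : ℝ} {n : ℕ} (hn : Even n) : cnWeight q n = 0 :=
  if_neg (Nat.not_odd_iff_even.mpr hn)

lemma summable_cnWeight {q : ℝ} (hq0 : 0 ≤ q) (hq1 : q < 1) : Summable (cnWeight q) := by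
  refine (summable_geometric_of_lt_one hq0 hq1).of_nonneg_of_le (fun n => ?_) (fun n => ?_)
  · unfold cnWeight; split_ifs <;> positivity
  · unfold cnWeight
    split_ifs
    · exact div_le_self (by positivity) (le_add_of_nonneg_right (by positivity))
    · positivity

theorem cnCoeff_add_mul_cnCoeff {q : ℝ} (hq0 : 0 < q) (hq1 : q < 1) {α : ℕ} (hα : 0 < α)
    (hαe : Even α) (n : ℕ) :
    cnCoeff q (α + n) * cnCoeff q n
      = q ^ ((α : ℝ) / 2) / (1 - q ^ α) * (cnWeight q n - cnWeight q (n + α)) := by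
  rcases Nat.even_or_odd n with hn | hn
  · rw [cnCoeff_of_even hn, cnWeight_of_even hn, cnWeight_of_even (hn.add hαe)]
    simp
  have hlt : q ^ α < 1 := pow_lt_one₀ hq0.le hq1 hα.ne'
  have hsqrt : q ^ (((α + n : ℕ) : ℝ) / 2) * q ^ ((n : ℝ) / 2) = q ^ ((α : ℝ) / 2) * q ^ n := by
    rw [← Real.rpow_natCast q n, ← Real.rpow_add hq0, ← Real.rpow_add hq0]
    push_cast
    ring_nf
  rw [cnCoeff_of_odd (hαe.add_odd hn), cnCoeff_of_odd hn, cnWeight_of_odd hn,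
    cnWeight_of_odd (hn.add_even hαe), div_mul_div_comm, hsqrt]
  field_simp [(sub_pos.mpr hlt).ne']
  ring

theorem sum_Icc_cnCoeff_mul_cnCoeff_sub {q : ℝ} (hq0 : 0 < q) (hq1 : q < 1) {α : ℕ}
    (hα : 0 < α) (hαe : Even α) :
    ∑ j ∈ Icc 1 (α - 1), cnCoeff q j * cnCoeff q (α - j)
      = q ^ ((α : ℝ) / 2) / (1 - q ^ α) * ∑ i ∈ range (α / 2),
          (1 / (1 + q ^ (α - (2 * i + 1))) - q ^ (2 * i + 1) / (1 + q ^ (2 * i + 1))) := by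
  have hodd := sum_range_two_mul_of_even_eq_zero
    (h := fun j => cnCoeff q j * cnCoeff q (α - j))
    (fun j hj => by simp only [cnCoeff_of_even hj, zero_mul]) (α / 2)
  rw [Nat.two_mul_div_two_of_even hαe, range_eq_Ico, sum_eq_sum_Ico_succ_bot hα,
    cnCoeff_of_even Even.zero, zero_mul, zero_add] at hodd
  rw [Icc_sub_one_right_eq_Ico_of_not_isMin (by simpa using hα.ne'), hodd, mul_sum]
  refine sum_congr rfl fun i hi => ?_
  have hle : 2 * i + 1 ≤ α := by
    obtain ⟨k, rfl⟩ := hαe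
    have := mem_range.mp hi
    omega
  have hsub : Odd (α - (2 * i + 1)) := (Nat.odd_sub hle).mpr (by simpa using hαe)
  rw [cnCoeff_mul_cnCoeff_of_odd hq0 hq1 (odd_two_mul_add_one i) hsub, Nat.add_sub_cancel' hle]

theorem tsum_cnCoeff_add_mul_cnCoeff {q : ℝ} (hq0 : 0 < q) (hq1 : q < 1) {α : ℕ}
    (hα : 0 < α) (hαe : Even α) :
    ∑' j : ℕ, cnCoeff q (α + (j + 1)) * cnCoeff q (j + 1)
      = q ^ ((α : ℝ) / 2) / (1 - q ^ α) *
          ∑ i ∈ range (α / 2), q ^ (2 * i + 1) / (1 + q ^ (2 * i + 1)) := by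
  have hterm := cnCoeff_add_mul_cnCoeff hq0 hq1 hα hαe
  have hw := summable_cnWeight hq0.le hq1
  have hsum : Summable fun n => cnCoeff q (α + n) * cnCoeff q n := by
    simp_rw [hterm]
    exact (hw.sub ((summable_nat_add_iff α).mpr hw)).mul_left _
  have hodd := sum_range_two_mul_of_even_eq_zero (fun _ hj => cnWeight_of_even (q := q) hj) (α / 2)
  rw [Nat.two_mul_div_two_of_even hαe] at hodd
  calc ∑' j : ℕ, cnCoeff q (α + (j + 1)) * cnCoeff q (j + 1)
      = ∑' n : ℕ, cnCoeff q (α + n) * cnCoeff q n := by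
        rw [hsum.tsum_eq_zero_add, cnCoeff_of_even Even.zero, mul_zero, zero_add]
    _ = q ^ ((α : ℝ) / 2) / (1 - q ^ α) * ∑ n ∈ range α, cnWeight q n := by
        simp_rw [hterm]
        rw [tsum_mul_left, tsum_sub_nat_add hw]
    _ = _ := by
        simp_rw [hodd, cnWeight_of_odd (odd_two_mul_add_one _)]

theorem sum_cnCoeff_combined (q : ℝ) (hq0 : 0 < q) (hq1 : q < 1)
    (α : ℕ) (hα : 0 < α) (h4 : 4 ∣ α) :
    (∑ j ∈ Finset.range (α / 2),
        (1 / (1 + q ^ (α - (2 * j + 1))) + q ^ (2 * j + 1) / (1 + q ^ (2 * j + 1))))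
      = (α : ℝ) / 2 ∧
    (∑ j ∈ Finset.Icc 1 (α - 1), cnCoeff q j * cnCoeff q (α - j))
        + 2 * ∑' j : ℕ, cnCoeff q (α + (j + 1)) * cnCoeff q (j + 1)
      = ((α : ℝ) / 2) * q ^ ((α : ℝ) / 2) / (1 - q ^ α) := by
  have hαe : Even α := even_iff_two_dvd.mpr ((by norm_num : 2 ∣ 4).trans h4)
  have hpair := sum_pairing_eq_half hq0.le hαe
  refine ⟨hpair, ?_⟩
  rw [sum_Icc_cnCoeff_mul_cnCoeff_sub hq0 hq1 hα hαe, tsum_cnCoeff_add_mul_cnCoeff hq0 hq1 hα hαe,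
    ← hpair, sum_add_distrib, sum_sub_distrib]
  ring
end
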